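/- Let H = ℂ² with triple product 2{λ,μ,ν} = ⟨λ,μ⟩ν + ⟨ν,μ⟩λ (inner product conjugate-linear in the second variable). Define the real-linear map T : ℂ² → ℂ² by T(λ₁,λ₂) = (Re(λ₂), -Re(λ₁)). Then T{x,x,x} = 2{T x, x, x} + {x, T x, x} for all x ∈ ℂ². -/

import Mathlib

/-!
Write `N = ⟨x, x⟩`, a real number. Then `{x, x, x} = N x`, and since `T` is real-linear the left
side is `N T x`. The right side is `N T x + (⟨T x, x⟩ + ⟨x, T x⟩) x`, and the bracket is
`2 Re ⟨T x, x⟩ = 2 (Re λ₂ Re λ₁ - Re λ₁ Re λ₂) = 0`.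
-/

/-- The inner product on ℂ², linear in the first variable, conjugate-linear in the second. -/
def ipC (x y : ℂ × ℂ) : ℂ := x.1 * starRingEnd ℂ y.1 + x.2 * starRingEnd ℂ y.2

/-- The triple product {λ,μ,ν} = (1/2)(⟨λ,μ⟩ν + ⟨ν,μ⟩λ) on ℂ². -/
noncomputable def tpC (x y z : ℂ × ℂ) : ℂ × ℂ :=
  (1/2 : ℂ) • (ipC x y • z + ipC z y • x)

/-- The real-linear map T(λ₁,λ₂) = (Re λ₂, -Re λ₁). -/
noncomputable def Tmap (p : ℂ × ℂ) : ℂ × ℂ := ((p.2.re : ℂ), -(p.1.re : ℂ))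

lemma ipC_self (x : ℂ × ℂ) : ipC x x = ((Complex.normSq x.1 + Complex.normSq x.2 : ℝ) : ℂ) := by
  simp only [ipC, Complex.mul_conj, Complex.ofReal_add]

lemma tpC_same_outer (x y : ℂ × ℂ) : tpC x y x = ipC x y • x := by
  rw [tpC, ← two_smul ℂ (ipC x y • x), smul_smul]
  norm_num

lemma two_smul_tpC_same_right (x y : ℂ × ℂ) :
    (2 : ℂ) • tpC y x x = ipC y x • x + ipC x x • y := by
  rw [tpC, smul_smul]
  norm_num

lemma Tmap_ofReal_smul (r : ℝ) (p : ℂ × ℂ) : Tmap ((r : ℂ) • p) = (r : ℂ) • Tmap p := by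
  ext <;> simp [Tmap]

lemma ipC_Tmap_add_ipC_Tmap (x : ℂ × ℂ) : ipC (Tmap x) x + ipC x (Tmap x) = 0 := by
  apply Complex.ext <;> simp [ipC, Tmap]
  ring

theorem stmt_4 :
    ∀ x : ℂ × ℂ, Tmap (tpC x x x) = (2 : ℂ) • tpC (Tmap x) x x + tpC x (Tmap x) x := by
  intro x
  rw [two_smul_tpC_same_right, tpC_same_outer, tpC_same_outer, ipC_self, Tmap_ofReal_smul, add_right_comm,
    ← add_smul, ipC_Tmap_add_ipC_Tmap, zero_smul, zero_add]
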